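/- arXiv:2512.10438 — 7 statements merged into one kernel-verified Lean document; each statement's English description precedes it below -/
import Mathlib

section
/- Let q ≥ r ≥ 1 be integers with r > 2q/3. Then F_{q,r}(n) = G_{q,r}(n) for all integers n ≥ 1. -/
/-- `x <_r y` : there are at least `r` coordinates `i` with `x i < y i`. -/
def rLess (q r : ℕ) (x y : Fin q → ℕ) : Prop :=
  r ≤ (Finset.univ.filter (fun i => x i < y i)).card

/-- `Fqr q r n` : the maximum length `N` of an `r`-increasing sequence of vectors in `[n]^q`. -/
noncomputable def Fqr (q r n : ℕ) : ℕ :=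
  sSup {N : ℕ | ∃ x : Fin N → Fin q → ℕ,
    (∀ a i, x a i ∈ Finset.Icc 1 n) ∧
    ∀ a b : Fin N, a < b → rLess q r (x a) (x b)}

/-- `Gqr q r n` : the maximum size of an `r`-comparable subset of `[n]^q`. -/
noncomputable def Gqr (q r n : ℕ) : ℕ :=
  sSup {N : ℕ | ∃ S : Finset (Fin q → ℕ), S.card = N ∧
    (∀ x ∈ S, ∀ i, x i ∈ Finset.Icc 1 n) ∧
    ∀ x ∈ S, ∀ y ∈ S, x ≠ y → rLess q r x y ∨ rLess q r y x}

lemma rLess_irrefl {q r : ℕ} (hr : 1 ≤ r) (x : Fin q → ℕ) : ¬ rLess q r x x := by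
  unfold rLess; simp; omega

lemma rLess_asymm {q r : ℕ} (h : 2 * q < 3 * r) {x y : Fin q → ℕ}
    (h1 : rLess q r x y) (h2 : rLess q r y x) : False := by
  unfold rLess at h1 h2
  have hd : Disjoint (Finset.univ.filter (fun i => x i < y i))
      (Finset.univ.filter (fun i => y i < x i)) := by
    simp only [Finset.disjoint_left, Finset.mem_filter, Finset.mem_univ, true_and]
    intro i hi
    omega
  have := Finset.card_union_of_disjoint hd
  have hle := Finset.card_le_univ ((Finset.univ.filter (fun i => x i < y i)) ∪
      (Finset.univ.filter (fun i => y i < x i)))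
  simp only [Finset.card_univ, Fintype.card_fin] at hle
  omega

lemma rLess_no_cycle {q r : ℕ} (h : 2 * q < 3 * r) {x y z : Fin q → ℕ}
    (h1 : rLess q r x y) (h2 : rLess q r y z) (h3 : rLess q r z x) : False := by
  unfold rLess at h1 h2 h3
  have key : (Finset.univ.filter (fun i => x i < y i)).card
      + (Finset.univ.filter (fun i => y i < z i)).card
      + (Finset.univ.filter (fun i => z i < x i)).card ≤ 2 * q := by
    rw [Finset.card_filter, Finset.card_filter, Finset.card_filter,
      ← Finset.sum_add_distrib, ← Finset.sum_add_distrib]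
    calc (∑ i : Fin q, ((if x i < y i then 1 else 0) + (if y i < z i then 1 else 0)
            + (if z i < x i then 1 else 0)))
        ≤ ∑ _i : Fin q, 2 := by
          apply Finset.sum_le_sum
          intro i _
          split_ifs <;> omega
      _ = 2 * q := by simp [Finset.sum_const, mul_comm]
  omega

lemma exists_seq {q r : ℕ} (hr : 1 ≤ r) (h : 2 * q < 3 * r)
    (S : Finset (Fin q → ℕ))
    (hcomp : ∀ x ∈ S, ∀ y ∈ S, x ≠ y → rLess q r x y ∨ rLess q r y x) :
    ∃ f : Fin S.card → Fin q → ℕ, (∀ a, f a ∈ S) ∧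
      ∀ a b : Fin S.card, a < b → rLess q r (f a) (f b) := by
  classical
  have htrans : ∀ x ∈ S, ∀ y ∈ S, ∀ z ∈ S,
      rLess q r x y → rLess q r y z → rLess q r x z := by
    intro x hx y hy z hz hxy hyz
    rcases eq_or_ne x z with rfl | hne
    · exact absurd hyz (fun h2 => rLess_asymm h hxy h2)
    rcases hcomp x hx z hz hne with h' | h'
    · exact h'
    · exact (rLess_no_cycle h hxy hyz h').elim
  set rank : (Fin q → ℕ) → ℕ := fun x => (S.filter (fun y => rLess q r y x)).card with hrankdef
  have mono : ∀ x ∈ S, ∀ y ∈ S, rLess q r x y → rank x < rank y := by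
    intro x hx y hy hxy
    apply Finset.card_lt_card
    rw [Finset.ssubset_iff_of_subset]
    · refine ⟨x, ?_, ?_⟩
      · simp only [Finset.mem_filter]; exact ⟨hx, hxy⟩
      · simp only [Finset.mem_filter, not_and]
        intro _
        exact rLess_irrefl hr x
    · intro z hz
      simp only [Finset.mem_filter] at hz ⊢
      exact ⟨hz.1, htrans z hz.1 x hx y hy hz.2 hxy⟩
  have rinj : ∀ x ∈ S, ∀ y ∈ S, rank x = rank y → x = y := by
    intro x hx y hy hxy
    by_contra hne
    rcases hcomp x hx y hy hne with h' | h'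
    · exact absurd hxy (Nat.ne_of_lt (mono x hx y hy h'))
    · exact absurd hxy.symm (Nat.ne_of_lt (mono y hy x hx h'))
  set T := S.image rank with hTdef
  have hT : T.card = S.card := by
    rw [hTdef]
    apply Finset.card_image_iff.2
    intro x hx y hy hxy
    exact rinj x (by simpa using hx) y (by simpa using hy) hxy
  have hmem : ∀ a : Fin S.card, ∃ s, s ∈ S ∧ rank s = (T.orderIsoOfFin hT a : ℕ) := by
    intro a
    have hmm := (T.orderIsoOfFin hT a).2
    have hmm2 : (T.orderIsoOfFin hT a : ℕ) ∈ S.image rank := hmm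
    simpa [eq_comm] using Finset.mem_image.1 hmm2
  choose f hfS hfr using hmem
  refine ⟨f, hfS, ?_⟩
  intro a b hab
  have hlt : (T.orderIsoOfFin hT a : ℕ) < (T.orderIsoOfFin hT b : ℕ) := by
    exact_mod_cast (T.orderIsoOfFin hT).lt_iff_lt.2 hab
  rw [← hfr a, ← hfr b] at hlt
  rcases eq_or_ne (f a) (f b) with he | hne
  · rw [he] at hlt; omega
  rcases hcomp _ (hfS a) _ (hfS b) hne with h' | h'
  · exact h'
  · exact absurd hlt (not_lt.2 (le_of_lt (mono _ (hfS b) _ (hfS a) h')))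

/-- Let `q ≥ r ≥ 1` be integers with `r > 2q/3`. Then `F_{q,r}(n) = G_{q,r}(n)` for all `n ≥ 1`. -/
theorem stmt_1 (q r : ℕ) (hr : 1 ≤ r) (hrq : r ≤ q) (h : 2 * q < 3 * r) :
    ∀ n : ℕ, 1 ≤ n → Fqr q r n = Gqr q r n := by
  classical
  intro n hn
  unfold Fqr Gqr
  congr 1
  ext N
  simp only [Set.mem_setOf_eq]
  constructor
  · rintro ⟨x, hbox, hinc⟩
    have hinj : Function.Injective x := by
      intro a b hab
      rcases lt_trichotomy a b with hlt | heq | hlt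
      · exact absurd (hinc a b hlt) (by rw [hab]; exact rLess_irrefl hr _)
      · exact heq
      · exact absurd (hinc b a hlt) (by rw [← hab]; exact rLess_irrefl hr _)
    refine ⟨Finset.univ.image x, ?_, ?_, ?_⟩
    · rw [Finset.card_image_of_injective _ hinj, Finset.card_univ, Fintype.card_fin]
    · intro v hv i
      rcases Finset.mem_image.1 hv with ⟨a, _, rfl⟩
      exact hbox a i
    · intro v hv w hw hvw
      rcases Finset.mem_image.1 hv with ⟨a, _, rfl⟩
      rcases Finset.mem_image.1 hw with ⟨b, _, rfl⟩
      rcases lt_trichotomy a b with hlt | heq | hlt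
      · exact Or.inl (hinc a b hlt)
      · exact absurd (congrArg x heq) hvw
      · exact Or.inr (hinc b a hlt)
  · rintro ⟨S, hcard, hbox, hcomp⟩
    obtain ⟨f, hfS, hinc⟩ := exists_seq hr h S hcomp
    subst hcard
    exact ⟨f, fun a i => hbox _ (hfS a) i, hinc⟩
end

section
/- For all integers q ≥ r ≥ 1, n ≥ 1 and all vectors x, y ∈ {1,…,n}^q, the (q,r)-pods of order n with apices x and y are disjoint if and only if x and y are r-comparable. -/
lemma pods_aux (q r : ℕ) (hrq : r ≤ q) (x y z : Fin q → ℤ)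
    (hlt : r ≤ (Finset.univ.filter (fun i => x i < y i)).card)
    (hzy : ∀ i, y i ≤ z i)
    (hagree : q - r + 1 ≤ (Finset.univ.filter (fun i => z i = x i)).card) : False := by
  have hsub : Finset.univ.filter (fun i => x i < y i) ⊆
      Finset.univ.filter (fun i => ¬ z i = x i) := by
    intro i hi
    simp only [Finset.mem_filter, Finset.mem_univ, true_and] at hi ⊢
    have := hzy i
    omega
  have h1 := Finset.card_le_card hsub
  have hsum : (Finset.univ.filter (fun i => z i = x i)).card +
      (Finset.univ.filter (fun i => ¬ z i = x i)).card = q := by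
    rw [Finset.card_filter_add_card_filter_not]
    simp
  omega


/-- `x <_r y` for integer vectors: at least `r` coordinates `i` with `x i < y i`. -/
def rLessZ (q r : ℕ) (x y : Fin q → ℤ) : Prop :=
  r ≤ (Finset.univ.filter (fun i => x i < y i)).card

/-- The `(q,r)`-pod of order `n` with apex `x` : the set of integer points `z` of the cube
`∏ [x i, x i + n - 1]` that agree with the apex in at least `q - r + 1` coordinates (the
corner together with the incident `(r-1)`-dimensional faces of the cube). -/
def pod (q r n : ℕ) (x : Fin q → ℤ) : Set (Fin q → ℤ) :=
  {z | (∀ i, x i ≤ z i ∧ z i ≤ x i + (n : ℤ) - 1) ∧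
    q - r + 1 ≤ (Finset.univ.filter (fun i => z i = x i)).card}

/-- For all integers `q ≥ r ≥ 1`, `n ≥ 1`, and all vectors `x, y ∈ [n]^q`, the `(q,r)`-pods
of order `n` with apices `x` and `y` are disjoint iff `x` and `y` are `r`-comparable. -/
theorem stmt_6 (q r n : ℕ) (hr : 1 ≤ r) (hrq : r ≤ q) (hn : 1 ≤ n)
    (x y : Fin q → ℤ) (hx : ∀ i, 1 ≤ x i ∧ x i ≤ (n : ℤ)) (hy : ∀ i, 1 ≤ y i ∧ y i ≤ (n : ℤ)) :
    Disjoint (pod q r n x) (pod q r n y) ↔ (rLessZ q r x y ∨ rLessZ q r y x) := by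
  constructor
  · intro hd
    by_contra hc
    push_neg at hc
    obtain ⟨h1, h2⟩ := hc
    unfold rLessZ at h1 h2
    push_neg at h1 h2
    set z : Fin q → ℤ := fun i => max (x i) (y i) with hz
    have haux : ∀ (a b : Fin q → ℤ),
        (Finset.univ.filter (fun i => b i < a i)).card < r →
        (∀ i, 1 ≤ b i ∧ b i ≤ (n : ℤ)) →
        (∀ i, 1 ≤ a i ∧ a i ≤ (n : ℤ)) →
        (fun i => max (b i) (a i)) ∈ pod q r n b := by
      intro a b hcard hb ha
      constructor
      · intro i
        have h1 := (ha i).1; have h2 := (ha i).2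
        have h3 := (hb i).1; have h4 := (hb i).2
        constructor
        · exact le_max_left _ _
        · simp only [max_le_iff]; omega
      · have hsub : Finset.univ.filter (fun i => ¬ b i < a i) ⊆
            Finset.univ.filter (fun i => (fun i => max (b i) (a i)) i = b i) := by
          intro i hi
          simp only [Finset.mem_filter, Finset.mem_univ, true_and] at hi ⊢
          exact max_eq_left (le_of_not_gt hi)
        have hle := Finset.card_le_card hsub
        have hsum : (Finset.univ.filter (fun i => b i < a i)).card +
            (Finset.univ.filter (fun i => ¬ b i < a i)).card = q := by
          rw [Finset.card_filter_add_card_filter_not]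
          simp
        omega
    have hzx : z ∈ pod q r n x := by
      have := haux y x ?_ hx hy
      · simpa [hz] using this
      · simpa using h1
    have hzy : z ∈ pod q r n y := by
      have := haux x y ?_ hy hx
      · simpa [hz, max_comm] using this
      · simpa using h2
    exact (Set.disjoint_left.mp hd hzx) hzy
  · intro h
    rw [Set.disjoint_left]
    intro z hzx hzy
    obtain ⟨hbx, hax⟩ := hzx
    obtain ⟨hby, hay⟩ := hzy
    rcases h with h | h
    · exact pods_aux q r hrq x y z h (fun i => (hby i).1) hax
    · exact pods_aux q r hrq y x z h (fun i => (hbx i).1) hay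
end

section
/- For all integers q ≥ 2 and n, N ≥ 1, we have f_{q,q−1}(N) ≤ n if and only if F_{q,q−1}(n) ≥ N. -/
/-!
Given a coloring in which every monotone path avoiding a color has at most `n` vertices, label
each vertex `a` by the vector whose `i`-th coordinate is the number of vertices of a longest
monotone path ending at `a` that avoids color `i`. If `a < b` and `χ a b = c`, every such path
ending at `a` extends by `b` when `i ≠ c`, so the labels form a `(q-1)`-increasing sequence in
`[n]^q`. Conversely, a `(q-1)`-increasing sequence fails to increase in at most one coordinate
between `a < b`; coloring the edge `ab` by that coordinate makes coordinate `j` strictly increase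
along every path avoiding color `j`, so such a path has at most `n` vertices.
-/

/-- A monotone path of length `ℓ` (number of vertices) in the `q`-edge-colored complete
graph on `[N]` given by `χ`, all of whose edge colors lie in `S`. -/
def HasMonoPath (q N : ℕ) (χ : Fin N → Fin N → Fin q) (S : Finset (Fin q)) (ℓ : ℕ) : Prop :=
  ∃ v : Fin ℓ → Fin N, StrictMono v ∧
    ∀ i j : Fin ℓ, (i : ℕ) + 1 = (j : ℕ) → χ (v i) (v j) ∈ S

/-- The maximum length of a monotone path using at most `r` colors in the coloring `χ`. -/
noncomputable def maxMonoLen (q r N : ℕ) (χ : Fin N → Fin N → Fin q) : ℕ :=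
  sSup {ℓ : ℕ | ∃ S : Finset (Fin q), S.card ≤ r ∧ HasMonoPath q N χ S ℓ}

/-- `fqr q r N` : the minimum over `q`-edge-colorings of the complete graph on `[N]` of the
maximum length of a monotone path using at most `r` colors. -/
noncomputable def fqr (q r N : ℕ) : ℕ :=
  sInf {L : ℕ | ∃ χ : Fin N → Fin N → Fin q, L = maxMonoLen q r N χ}

open Finset

section RLess

variable {q r : ℕ} {x y : Fin q → ℕ}

lemma rLess.exists_lt (h : rLess q r x y) (hr : 0 < r) : ∃ i, x i < y i := by
  obtain ⟨i, hi⟩ := card_pos.1 (hr.trans_le h)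
  exact ⟨i, (mem_filter.1 hi).2⟩

lemma rLess_pred_of_forall_ne_lt {c : Fin q} (hc : ∀ i ≠ c, x i < y i) : rLess q (q - 1) x y :=
  calc q - 1 = (univ.erase c).card := by simp
    _ ≤ _ := card_le_card fun i hi => mem_filter.2 ⟨mem_univ i, hc i (ne_of_mem_erase hi)⟩

lemma rLess_pred_iff (hq : q ≠ 0) : rLess q (q - 1) x y ↔ ∃ c, ∀ i ≠ c, x i < y i := by
  have : Nonempty (Fin q) := ⟨⟨0, Nat.pos_of_ne_zero hq⟩⟩
  classical
  constructor
  · intro h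
    have hcard : (univ.filter fun i => ¬x i < y i).card ≤ 1 := by
      have := card_filter_add_card_filter_not (s := (univ : Finset (Fin q))) fun i => x i < y i
      rw [card_univ, Fintype.card_fin] at this
      unfold rLess at h
      omega
    obtain ⟨c, hc⟩ := card_le_one_iff_subset_singleton.1 hcard
    refine ⟨c, fun i hi => ?_⟩
    by_contra hlt
    exact hi (mem_singleton.1 (hc (mem_filter.2 ⟨mem_univ i, hlt⟩)))
  · rintro ⟨c, hc⟩
    exact rLess_pred_of_forall_ne_lt hc

end RLess

section Fqr

variable {q r n N : ℕ}

lemma card_le_pow_of_rLess (hr : 0 < r) {x : Fin N → Fin q → ℕ}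
    (hx : ∀ a i, x a i ∈ Icc 1 n) (hinc : ∀ a b, a < b → rLess q r (x a) (x b)) :
    N ≤ n ^ q := by
  classical
  have hinj : Function.Injective x := by
    intro a b hab
    by_contra hne
    rcases lt_or_gt_of_ne hne with h | h
    · obtain ⟨i, hi⟩ := (hinc a b h).exists_lt hr
      exact hi.ne (congrFun hab i)
    · obtain ⟨i, hi⟩ := (hinc b a h).exists_lt hr
      exact hi.ne (congrFun hab i).symm
  simpa using card_le_card_of_injOn (s := univ) (t := Fintype.piFinset fun _ => Icc 1 n) x
    (fun a _ => Fintype.mem_piFinset.2 (hx a)) hinj.injOn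

lemma le_Fqr_iff (hr : 0 < r) :
    N ≤ Fqr q r n ↔ ∃ x : Fin N → Fin q → ℕ,
      (∀ a i, x a i ∈ Icc 1 n) ∧ ∀ a b, a < b → rLess q r (x a) (x b) := by
  have hbdd : BddAbove {N : ℕ | ∃ x : Fin N → Fin q → ℕ,
      (∀ a i, x a i ∈ Icc 1 n) ∧ ∀ a b : Fin N, a < b → rLess q r (x a) (x b)} :=
    ⟨n ^ q, fun _ ⟨_, hx, hinc⟩ => card_le_pow_of_rLess hr hx hinc⟩
  constructor
  · intro hN
    obtain ⟨x, hx, hinc⟩ := Nat.sSup_mem (by exact ⟨0, finZeroElim, finZeroElim, finZeroElim⟩) hbdd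
    exact ⟨fun a => x (Fin.castLE hN a), fun a => hx _, fun a b hab => hinc _ _ hab⟩
  · exact (le_csSup hbdd ·)

end Fqr

section MonoPath

variable {q N : ℕ} (χ : Fin N → Fin N → Fin q) (S : Finset (Fin q))

def IsMonoPath {ℓ : ℕ} (v : Fin ℓ → Fin N) : Prop :=
  StrictMono v ∧ ∀ i j : Fin ℓ, (i : ℕ) + 1 = (j : ℕ) → χ (v i) (v j) ∈ S

/-- The number of edges (not vertices) of a longest monotone path with colors in `S` ending at
`a`. -/
noncomputable def depth (a : Fin N) : ℕ :=
  sSup {ℓ | ∃ v : Fin (ℓ + 1) → Fin N, IsMonoPath χ S v ∧ v (Fin.last ℓ) = a}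

variable {χ S}

lemma IsMonoPath.length_le {ℓ : ℕ} {v : Fin ℓ → Fin N} (hv : IsMonoPath χ S v) : ℓ ≤ N := by
  simpa using Fintype.card_le_of_injective v hv.1.injective

lemma isMonoPath_iff_succ {ℓ : ℕ} {v : Fin (ℓ + 1) → Fin N} :
    IsMonoPath χ S v ↔ ∀ i : Fin ℓ, v i.castSucc < v i.succ ∧ χ (v i.castSucc) (v i.succ) ∈ S := by
  have hsucc : (∀ k l : Fin (ℓ + 1), (k : ℕ) + 1 = l → χ (v k) (v l) ∈ S) ↔
      ∀ i : Fin ℓ, χ (v i.castSucc) (v i.succ) ∈ S := by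
    refine ⟨fun h i => h _ _ rfl, fun h k l hkl => ?_⟩
    have hk : (k : ℕ) < ℓ := by omega
    have hl : l = (⟨k, hk⟩ : Fin ℓ).succ := Fin.ext hkl.symm
    exact hl ▸ h ⟨k, hk⟩
  rw [IsMonoPath, Fin.strictMono_iff_lt_succ, hsucc, forall_and]

lemma IsMonoPath.snoc {ℓ : ℕ} {v : Fin (ℓ + 1) → Fin N} (hv : IsMonoPath χ S v) {b : Fin N}
    (hb : v (Fin.last ℓ) < b) (hχ : χ (v (Fin.last ℓ)) b ∈ S) :
    IsMonoPath χ S (Fin.snoc v b : Fin (ℓ + 2) → Fin N) := by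
  rw [isMonoPath_iff_succ] at hv ⊢
  intro i
  induction i using Fin.lastCases with
  | last => rw [Fin.succ_last, Fin.snoc_last, Fin.snoc_castSucc]; exact ⟨hb, hχ⟩
  | cast i => rw [← Fin.castSucc_succ, Fin.snoc_castSucc, Fin.snoc_castSucc]; exact hv i

lemma IsMonoPath.mono {T : Finset (Fin q)} {ℓ : ℕ} {v : Fin ℓ → Fin N} (hv : IsMonoPath χ S v)
    (hST : S ⊆ T) : IsMonoPath χ T v :=
  ⟨hv.1, fun i j hij => hST (hv.2 i j hij)⟩

lemma IsMonoPath.length_le_of_forall_lt {ℓ n : ℕ} {v : Fin ℓ → Fin N} (hv : IsMonoPath χ S v)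
    {f : Fin N → ℕ} (hf : ∀ a b, a < b → χ a b ∈ S → f a < f b) (hfn : ∀ a, f a ∈ Icc 1 n) :
    ℓ ≤ n := by
  cases ℓ with
  | zero => exact Nat.zero_le n
  | succ ℓ =>
    have hmono : StrictMono (f ∘ v) := Fin.strictMono_iff_lt_succ.2 fun i =>
      have hi := isMonoPath_iff_succ.1 hv i
      hf _ _ hi.1 hi.2
    simpa using card_le_card_of_injOn (s := univ) (t := Icc 1 n) (f ∘ v) (fun k _ => hfn (v k))
      hmono.injective.injOn

lemma bddAbove_depth (a : Fin N) :
    BddAbove {ℓ | ∃ v : Fin (ℓ + 1) → Fin N, IsMonoPath χ S v ∧ v (Fin.last ℓ) = a} :=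
  ⟨N, fun ℓ ⟨_, hv, _⟩ => by have := hv.length_le; omega⟩

lemma exists_isMonoPath_depth (a : Fin N) :
    ∃ v : Fin (depth χ S a + 1) → Fin N, IsMonoPath χ S v ∧ v (Fin.last _) = a :=
  Nat.sSup_mem (by exact ⟨0, fun _ => a, isMonoPath_iff_succ.2 finZeroElim, rfl⟩)
    (bddAbove_depth a)

lemma depth_lt_depth {a b : Fin N} (hab : a < b) (hχ : χ a b ∈ S) : depth χ S a < depth χ S b := by
  obtain ⟨v, hv, hva⟩ := exists_isMonoPath_depth (χ := χ) (S := S) a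
  exact Nat.lt_of_succ_le <| le_csSup (bddAbove_depth b)
    ⟨_, hv.snoc (by rwa [hva]) (by rwa [hva]), Fin.snoc_last _ _⟩

end MonoPath

section MaxMonoLen

variable {q r N n : ℕ} {χ : Fin N → Fin N → Fin q}

lemma le_maxMonoLen {S : Finset (Fin q)} {ℓ : ℕ} {v : Fin ℓ → Fin N} (hv : IsMonoPath χ S v)
    (hS : S.card ≤ r) : ℓ ≤ maxMonoLen q r N χ :=
  le_csSup ⟨N, fun _ ⟨_, _, v, hv⟩ => IsMonoPath.length_le (v := v) hv⟩ ⟨S, hS, v, hv⟩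

lemma maxMonoLen_pred_le (hq : q ≠ 0)
    (h : ∀ j ℓ (v : Fin ℓ → Fin N), IsMonoPath χ {j}ᶜ v → ℓ ≤ n) :
    maxMonoLen q (q - 1) N χ ≤ n := by
  refine csSup_le' fun ℓ ⟨S, hS, v, hv⟩ => ?_
  obtain ⟨j, hj⟩ : ∃ j, j ∉ S := by
    by_contra! hS'
    rw [eq_univ_of_forall hS', card_univ, Fintype.card_fin] at hS
    omega
  exact h j ℓ v <| IsMonoPath.mono (v := v) hv fun i hi =>
    mem_compl.2 fun hij => hj (mem_singleton.1 hij ▸ hi)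

lemma fqr_le_iff (hq : q ≠ 0) :
    fqr q r N ≤ n ↔ ∃ χ : Fin N → Fin N → Fin q, maxMonoLen q r N χ ≤ n := by
  constructor
  · intro h
    obtain ⟨χ, hχ⟩ : fqr q r N ∈ _ := Nat.sInf_mem ⟨_, fun _ _ => ⟨0, Nat.pos_of_ne_zero hq⟩, rfl⟩
    exact ⟨χ, hχ ▸ h⟩
  · rintro ⟨χ, h⟩
    exact le_trans (Nat.sInf_le ⟨χ, rfl⟩) h

lemma exists_rLess_of_maxMonoLen_le (h : maxMonoLen q (q - 1) N χ ≤ n) :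
    ∃ x : Fin N → Fin q → ℕ,
      (∀ a i, x a i ∈ Icc 1 n) ∧ ∀ a b, a < b → rLess q (q - 1) (x a) (x b) := by
  classical
  refine ⟨fun a i => depth χ {i}ᶜ a + 1, fun a i => ?_, fun a b hab => ?_⟩
  · obtain ⟨v, hv, -⟩ := exists_isMonoPath_depth (χ := χ) (S := {i}ᶜ) a
    exact mem_Icc.2 ⟨le_add_self, (le_maxMonoLen hv (by simp [card_compl])).trans h⟩
  · exact rLess_pred_of_forall_ne_lt (c := χ a b) fun i hi =>
      Nat.succ_lt_succ (depth_lt_depth hab (by simpa using hi.symm))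

lemma exists_maxMonoLen_le_of_rLess (hq : q ≠ 0) {x : Fin N → Fin q → ℕ}
    (hx : ∀ a i, x a i ∈ Icc 1 n) (hinc : ∀ a b, a < b → rLess q (q - 1) (x a) (x b)) :
    ∃ χ : Fin N → Fin N → Fin q, maxMonoLen q (q - 1) N χ ≤ n := by
  have : ∀ a b : Fin N, ∃ c : Fin q, a < b → ∀ i ≠ c, x a i < x b i := by
    intro a b
    by_cases hab : a < b
    · obtain ⟨c, hc⟩ := (rLess_pred_iff hq).1 (hinc a b hab)
      exact ⟨c, fun _ => hc⟩
    · exact ⟨⟨0, Nat.pos_of_ne_zero hq⟩, fun h => absurd h hab⟩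
  choose χ hχ using this
  refine ⟨χ, maxMonoLen_pred_le hq fun j ℓ v hv => hv.length_le_of_forall_lt
    (fun a b hab hj => hχ a b hab j (by simpa [eq_comm] using hj)) fun a => hx a j⟩

end MaxMonoLen

theorem stmt_7_general (q n N : ℕ) (hq : 2 ≤ q) :
    fqr q (q - 1) N ≤ n ↔ N ≤ Fqr q (q - 1) n := by
  have hq0 : q ≠ 0 := by omega
  rw [fqr_le_iff hq0, le_Fqr_iff (by omega)]
  constructor
  · rintro ⟨χ, hχ⟩
    exact exists_rLess_of_maxMonoLen_le hχ
  · rintro ⟨x, hx, hinc⟩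
    exact exists_maxMonoLen_le_of_rLess hq0 hx hinc

/-- For all integers `q ≥ 2` and `n, N ≥ 1`, `f_{q,q-1}(N) ≤ n` iff `F_{q,q-1}(n) ≥ N`. -/
theorem stmt_7 (q n N : ℕ) (hq : 2 ≤ q) (hn : 1 ≤ n) (hN : 1 ≤ N) :
    fqr q (q - 1) N ≤ n ↔ N ≤ Fqr q (q - 1) n :=
  stmt_7_general q n N hq
end

section
/- Let K₁ and K₂ be q-edge-colored ordered complete graphs, and let S ⊆ {1,…,q} be a set of colors. Let L₁ and L₂ be the lengths (numbers of vertices) of the longest S-colored monotone paths in K₁ and K₂ respectively. Then the length of the longest S-colored monotone path in the lexicographic product K₁ ⊗ K₂ is exactly L₁·L₂. -/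
/-- The lexicographic order on `β × α` (first coordinate dominant). -/
def lexLT {α β : Type*} [LT α] [LT β] (p p' : β × α) : Prop :=
  p.1 < p'.1 ∨ (p.1 = p'.1 ∧ p.2 < p'.2)

/-- The coloring of the lexicographic product `K₁ ⊗ K₂` of the `q`-edge-colored ordered
complete graphs with colorings `χ₁` (on `α`) and `χ₂` (on `β`): the edge between `(b,a)`
and `(b',a')` gets the color of `a a'` in `K₁` if `b = b'`, and of `b b'` in `K₂` otherwise. -/
def lexColor {α β : Type*} {q : ℕ} [DecidableEq β] (χ₁ : α → α → Fin q)
    (χ₂ : β → β → Fin q) : β × α → β × α → Fin q :=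
  fun p p' => if p.1 = p'.1 then χ₁ p.2 p'.2 else χ₂ p.1 p'.1

/-- The edge-coloring `χ` has a monotone path (w.r.t. the order `lt`) with `ℓ` vertices,
all of whose edge colors lie in `S`. -/
def HasSMonoPath {V : Type*} {q : ℕ} (lt : V → V → Prop) (χ : V → V → Fin q)
    (S : Finset (Fin q)) (ℓ : ℕ) : Prop :=
  ∃ v : Fin ℓ → V, (∀ i j : Fin ℓ, i < j → lt (v i) (v j)) ∧
    ∀ i j : Fin ℓ, (i : ℕ) + 1 = (j : ℕ) → χ (v i) (v j) ∈ S

/-- The number of vertices of a longest `S`-colored monotone path. -/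
noncomputable def longestSMono {V : Type*} {q : ℕ} (lt : V → V → Prop)
    (χ : V → V → Fin q) (S : Finset (Fin q)) : ℕ :=
  sSup {ℓ : ℕ | HasSMonoPath lt χ S ℓ}

section Aux

variable {V : Type*} {q : ℕ}

/-- Number of block changes among the first `n` steps of `u`. -/
noncomputable def Bfun {α β : Type*} (u : ℕ → β × α) : ℕ → ℕ
  | 0 => 0
  | n+1 => Bfun u n + (by classical exact if (u n).1 = (u (n+1)).1 then 0 else 1)

/-- Length (minus one) of the current same-block run at position `n`. -/
noncomputable def Rfun {α β : Type*} (u : ℕ → β × α) : ℕ → ℕ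
  | 0 => 0
  | n+1 => by classical exact if (u n).1 = (u (n+1)).1 then Rfun u n + 1 else 0

/-- An `S`-colored monotone path with `ℓ` vertices ending at `x`. -/
def PathTo (lt : V → V → Prop) (χ : V → V → Fin q) (S : Finset (Fin q))
    (ℓ : ℕ) (x : V) : Prop :=
  ∃ v : Fin ℓ → V, (∀ i j : Fin ℓ, i < j → lt (v i) (v j)) ∧
    (∀ i j : Fin ℓ, (i : ℕ) + 1 = (j : ℕ) → χ (v i) (v j) ∈ S) ∧
    ∃ h0 : 0 < ℓ, v ⟨ℓ - 1, by omega⟩ = x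

theorem pathTo_hasS {lt : V → V → Prop} {χ : V → V → Fin q} {S : Finset (Fin q)}
    {ℓ : ℕ} {x : V} (h : PathTo lt χ S ℓ x) : HasSMonoPath lt χ S ℓ := by
  obtain ⟨v, h1, h2, _⟩ := h
  exact ⟨v, h1, h2⟩

theorem pathTo_one (lt : V → V → Prop) (χ : V → V → Fin q) (S : Finset (Fin q))
    (x : V) : PathTo lt χ S 1 x := by
  refine ⟨fun _ => x, ?_, ?_, Nat.one_pos, rfl⟩
  · intro i j hij
    have hi := i.isLt
    have hj := j.isLt
    have := (Fin.lt_def).mp hij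
    omega
  · intro i j hij
    have hj := j.isLt
    omega

theorem pathTo_extend {lt : V → V → Prop} {χ : V → V → Fin q} {S : Finset (Fin q)}
    {ℓ : ℕ} {x y : V} (htrans : ∀ a b c, lt a b → lt b c → lt a c)
    (h : PathTo lt χ S ℓ x) (hxy : lt x y) (hS : χ x y ∈ S) :
    PathTo lt χ S (ℓ + 1) y := by
  classical
  obtain ⟨v, hm, hc, h0, hlast⟩ := h
  refine ⟨fun i => if h : (i : ℕ) < ℓ then v ⟨i, h⟩ else y, ?_, ?_, Nat.succ_pos _, ?_⟩
  · intro i j hij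
    have hij' : (i : ℕ) < (j : ℕ) := hij
    have hj' := j.isLt
    by_cases hj : (j : ℕ) < ℓ
    · have hi : (i : ℕ) < ℓ := by omega
      simp only [dif_pos hi, dif_pos hj]
      exact hm _ _ (Fin.mk_lt_mk.mpr hij')
    · have hjℓ : (j : ℕ) = ℓ := by omega
      have hi : (i : ℕ) < ℓ := by omega
      simp only [dif_pos hi, dif_neg hj]
      by_cases hie : (i : ℕ) = ℓ - 1
      · have : (⟨(i : ℕ), hi⟩ : Fin ℓ) = ⟨ℓ - 1, by omega⟩ := by
          apply Fin.ext; simp [hie]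
        rw [this, hlast]; exact hxy
      · have hlt1 : lt (v ⟨(i : ℕ), hi⟩) x := by
          rw [← hlast]
          exact hm _ _ (Fin.mk_lt_mk.mpr (by omega))
        exact htrans _ _ _ hlt1 hxy
  · intro i j hij
    have hj' := j.isLt
    by_cases hj : (j : ℕ) < ℓ
    · have hi : (i : ℕ) < ℓ := by omega
      simp only [dif_pos hi, dif_pos hj]
      exact hc _ _ (by simpa using hij)
    · have hjℓ : (j : ℕ) = ℓ := by omega
      have hi : (i : ℕ) < ℓ := by omega
      have hie : (i : ℕ) = ℓ - 1 := by omega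
      simp only [dif_pos hi, dif_neg hj]
      have : (⟨(i : ℕ), hi⟩ : Fin ℓ) = ⟨ℓ - 1, by omega⟩ := by
        apply Fin.ext; simp [hie]
      rw [this, hlast]; exact hS
  · simp

theorem hasS_zero (lt : V → V → Prop) (χ : V → V → Fin q) (S : Finset (Fin q)) :
    HasSMonoPath lt χ S 0 :=
  ⟨fun i => i.elim0, fun i => i.elim0, fun i => i.elim0⟩

theorem hasS_one [Nonempty V] (lt : V → V → Prop) (χ : V → V → Fin q)
    (S : Finset (Fin q)) : HasSMonoPath lt χ S 1 := by
  refine ⟨fun _ => Classical.arbitrary V, ?_, ?_⟩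
  · intro i j hij
    have hi := i.isLt; have hj := j.isLt
    have := (Fin.lt_def).mp hij
    omega
  · intro i j hij
    have hj := j.isLt
    omega

theorem bddAbove_hasS [Fintype V] {lt : V → V → Prop} (hirr : ∀ x, ¬ lt x x)
    (χ : V → V → Fin q) (S : Finset (Fin q)) :
    BddAbove {ℓ : ℕ | HasSMonoPath lt χ S ℓ} := by
  refine ⟨Fintype.card V, ?_⟩
  rintro ℓ ⟨v, hm, -⟩
  have hinj : Function.Injective v := by
    intro i j hij
    by_contra hne
    rcases Ne.lt_or_gt hne with h | h
    · exact hirr _ (hij ▸ hm _ _ h)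
    · exact hirr _ (hij ▸ hm _ _ h)
  calc ℓ = Fintype.card (Fin ℓ) := (Fintype.card_fin ℓ).symm
    _ ≤ Fintype.card V := Fintype.card_le_of_injective v hinj

end Aux

/-- If `L₁, L₂` are the lengths of the longest `S`-colored monotone paths in the
`q`-edge-colored ordered complete graphs `K₁, K₂`, then the longest `S`-colored monotone
path in `K₁ ⊗ K₂` has length exactly `L₁·L₂`. -/
theorem stmt_9 {α β : Type*} [LinearOrder α] [Fintype α] [Nonempty α]
    [LinearOrder β] [Fintype β] [Nonempty β] {q : ℕ}
    (χ₁ : α → α → Fin q) (χ₂ : β → β → Fin q) (S : Finset (Fin q)) :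
    longestSMono lexLT (lexColor χ₁ χ₂) S =
      longestSMono (· < ·) χ₁ S * longestSMono (· < ·) χ₂ S := by
  classical
  set L₁ := longestSMono (· < · : α → α → Prop) χ₁ S with hL₁def
  set L₂ := longestSMono (· < · : β → β → Prop) χ₂ S with hL₂def
  have hirrlex : ∀ p : β × α, ¬ lexLT p p := by
    rintro p (h | ⟨-, h⟩) <;> exact lt_irrefl _ h
  have htranslex : ∀ a b c : β × α, lexLT a b → lexLT b c → lexLT a c := by
    rintro a b c (h1 | ⟨h1, h1'⟩) (h2 | ⟨h2, h2'⟩)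
    · exact Or.inl (lt_trans h1 h2)
    · exact Or.inl (h2 ▸ h1)
    · exact Or.inl (h1 ▸ h2)
    · exact Or.inr ⟨h1.trans h2, lt_trans h1' h2'⟩
  have hbdd₁ : BddAbove {ℓ : ℕ | HasSMonoPath (· < · : α → α → Prop) χ₁ S ℓ} :=
    bddAbove_hasS (fun x => lt_irrefl x) χ₁ S
  have hbdd₂ : BddAbove {ℓ : ℕ | HasSMonoPath (· < · : β → β → Prop) χ₂ S ℓ} :=
    bddAbove_hasS (fun x => lt_irrefl x) χ₂ S
  have hbddP : BddAbove {ℓ : ℕ | HasSMonoPath lexLT (lexColor χ₁ χ₂) S ℓ} :=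
    bddAbove_hasS hirrlex (lexColor χ₁ χ₂) S
  have hmem₁ : HasSMonoPath (· < · : α → α → Prop) χ₁ S L₁ :=
    Nat.sSup_mem ⟨0, by exact hasS_zero _ _ _⟩ hbdd₁
  have hmem₂ : HasSMonoPath (· < · : β → β → Prop) χ₂ S L₂ :=
    Nat.sSup_mem ⟨0, by exact hasS_zero _ _ _⟩ hbdd₂
  have hL₁pos : 0 < L₁ := le_csSup hbdd₁ (hasS_one _ _ _)
  have hL₂pos : 0 < L₂ := le_csSup hbdd₂ (hasS_one _ _ _)
  apply le_antisymm
  · -- upper bound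
    apply csSup_le ⟨0, by exact hasS_zero _ _ _⟩
    rintro ℓ ⟨w, hmono, hcol⟩
    rcases Nat.eq_zero_or_pos ℓ with h0 | hpos
    · simp [h0]
    obtain ⟨m, rfl⟩ : ∃ m, ℓ = m + 1 := ⟨ℓ - 1, by omega⟩
    set u : ℕ → β × α := fun n => w ⟨min n m, by omega⟩ with hu
    have hustep : ∀ n, n < m →
        lexLT (u n) (u (n+1)) ∧ lexColor χ₁ χ₂ (u n) (u (n+1)) ∈ S := by
      intro n hn
      have h1 : min n m = n := by omega
      have h2 : min (n+1) m = n + 1 := by omega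
      constructor
      · exact hmono _ _ (by simp [Fin.lt_def, h1, h2])
      · exact hcol _ _ (by simp [h1, h2])
    have key : ∀ n, n ≤ m →
        PathTo (· < · : β → β → Prop) χ₂ S (Bfun u n + 1) ((u n).1) ∧
        PathTo (· < · : α → α → Prop) χ₁ S (Rfun u n + 1) ((u n).2) ∧
        n ≤ Bfun u n * L₁ + Rfun u n := by
      intro n
      induction n with
      | zero => exact fun _ => ⟨pathTo_one _ _ _ _, pathTo_one _ _ _ _, by simp [Bfun, Rfun]⟩
      | succ k ih =>
        intro hk1
        obtain ⟨ihB, ihR, ihc⟩ := ih (by omega)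
        obtain ⟨hlt, hcolk⟩ := hustep k (by omega)
        have hRle : Rfun u k + 1 ≤ L₁ := le_csSup hbdd₁ (pathTo_hasS ihR)
        by_cases heq : (u k).1 = (u (k+1)).1
        · have hBeq : Bfun u (k+1) = Bfun u k := by simp [Bfun, heq]
          have hReq : Rfun u (k+1) = Rfun u k + 1 := by simp [Rfun, heq]
          have hlt2 : (u k).2 < (u (k+1)).2 := by
            rcases hlt with h | ⟨-, h⟩
            · rw [heq] at h; exact absurd h (lt_irrefl _)
            · exact h
          have hcol2 : χ₁ (u k).2 (u (k+1)).2 ∈ S := by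
            rwa [lexColor, if_pos heq] at hcolk
          refine ⟨?_, ?_, ?_⟩
          · rw [hBeq, ← heq]; exact ihB
          · rw [hReq]
            exact pathTo_extend (fun a b c => lt_trans) ihR hlt2 hcol2
          · rw [hBeq, hReq]; omega
        · have hBeq : Bfun u (k+1) = Bfun u k + 1 := by simp [Bfun, heq]
          have hReq : Rfun u (k+1) = 0 := by simp [Rfun, heq]
          have hlt2 : (u k).1 < (u (k+1)).1 := by
            rcases hlt with h | ⟨h, -⟩
            · exact h
            · exact absurd h heq
          have hcol2 : χ₂ (u k).1 (u (k+1)).1 ∈ S := by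
            rwa [lexColor, if_neg heq] at hcolk
          refine ⟨?_, ?_, ?_⟩
          · rw [hBeq]
            exact pathTo_extend (fun a b c => lt_trans) ihB hlt2 hcol2
          · rw [hReq]; exact pathTo_one _ _ _ _
          · rw [hBeq, hReq]
            have : (Bfun u k + 1) * L₁ = Bfun u k * L₁ + L₁ := by ring
            omega
    obtain ⟨hB, hR, hc⟩ := key m le_rfl
    have hBle : Bfun u m + 1 ≤ L₂ := le_csSup hbdd₂ (pathTo_hasS hB)
    have hRle : Rfun u m + 1 ≤ L₁ := le_csSup hbdd₁ (pathTo_hasS hR)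
    calc m + 1 ≤ Bfun u m * L₁ + (Rfun u m + 1) := by omega
      _ ≤ Bfun u m * L₁ + L₁ := by omega
      _ = (Bfun u m + 1) * L₁ := by ring
      _ ≤ L₂ * L₁ := Nat.mul_le_mul_right _ hBle
      _ = L₁ * L₂ := Nat.mul_comm _ _
  · -- lower bound
    obtain ⟨v₁, hm₁, hc₁⟩ := hmem₁
    obtain ⟨v₂, hm₂, hc₂⟩ := hmem₂
    apply le_csSup hbddP
    have hdiv : ∀ k : Fin (L₁ * L₂), (k : ℕ) / L₁ < L₂ := by
      intro k
      exact (Nat.div_lt_iff_lt_mul hL₁pos).mpr (lt_of_lt_of_le k.isLt (le_of_eq (Nat.mul_comm L₁ L₂)))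
    refine ⟨fun k => (v₂ ⟨(k : ℕ) / L₁, hdiv k⟩, v₁ ⟨(k : ℕ) % L₁, Nat.mod_lt _ hL₁pos⟩),
      ?_, ?_⟩
    · intro i j hij
      have hij' : (i : ℕ) < (j : ℕ) := hij
      have hdle : (i : ℕ) / L₁ ≤ (j : ℕ) / L₁ := Nat.div_le_div_right (le_of_lt hij')
      rcases lt_or_eq_of_le hdle with hd | hd
      · exact Or.inl (hm₂ _ _ (by simpa [Fin.lt_def] using hd))
      · refine Or.inr ⟨?_, ?_⟩
        · exact congrArg v₂ (Fin.ext hd)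
        · apply hm₁
          rw [Fin.lt_def]
          have h1 := Nat.div_add_mod (i : ℕ) L₁
          have h2 := Nat.div_add_mod (j : ℕ) L₁
          rw [hd] at h1
          have : L₁ * ((j : ℕ) / L₁) + (i : ℕ) % L₁ < L₁ * ((j : ℕ) / L₁) + (j : ℕ) % L₁ := by
            rw [h1, h2]; exact hij'
          exact Nat.lt_of_add_lt_add_left this
    · intro i j hij
      have hi : (i : ℕ) = L₁ * ((i : ℕ) / L₁) + (i : ℕ) % L₁ := (Nat.div_add_mod _ _).symm
      have hr : (i : ℕ) % L₁ < L₁ := Nat.mod_lt _ hL₁pos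
      by_cases hcase : (i : ℕ) % L₁ + 1 < L₁
      · have hj : (j : ℕ) = L₁ * ((i : ℕ) / L₁) + ((i : ℕ) % L₁ + 1) := by omega
        have hjd : (j : ℕ) / L₁ = (i : ℕ) / L₁ := by
          rw [hj, Nat.mul_add_div hL₁pos, Nat.div_eq_of_lt hcase, Nat.add_zero]
        have hjm : (j : ℕ) % L₁ = (i : ℕ) % L₁ + 1 := by
          rw [hj, Nat.mul_add_mod, Nat.mod_eq_of_lt hcase]
        have hfst : v₂ ⟨(i : ℕ) / L₁, hdiv i⟩ = v₂ ⟨(j : ℕ) / L₁, hdiv j⟩ :=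
          congrArg v₂ (Fin.ext hjd.symm)
        rw [lexColor]
        simp only []
        rw [if_pos hfst]
        exact hc₁ _ _ (by simp [hjm])
      · have hrL : (i : ℕ) % L₁ + 1 = L₁ := by omega
        have hj : (j : ℕ) = L₁ * ((i : ℕ) / L₁ + 1) := by
          have h1 : L₁ * ((i : ℕ) / L₁ + 1) = L₁ * ((i : ℕ) / L₁) + ((i : ℕ) % L₁ + 1) := by
            rw [Nat.mul_add, Nat.mul_one, hrL]
          rw [h1, ← Nat.add_assoc, ← hi, hij]
        have hjd : (j : ℕ) / L₁ = (i : ℕ) / L₁ + 1 := by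
          rw [hj, Nat.mul_div_cancel_left _ hL₁pos]
        have hfst : v₂ ⟨(i : ℕ) / L₁, hdiv i⟩ ≠ v₂ ⟨(j : ℕ) / L₁, hdiv j⟩ := by
          intro hcon
          have : (⟨(i : ℕ) / L₁, hdiv i⟩ : Fin L₂) < ⟨(j : ℕ) / L₁, hdiv j⟩ := by
            rw [Fin.lt_def]; simp [hjd]
          exact lt_irrefl _ (hcon ▸ hm₂ _ _ this)
        rw [lexColor]
        simp only []
        rw [if_neg hfst]
        exact hc₂ _ _ (by simp [hjd])
end

section
/- Fix integers q > r ≥ 1 and a real number α ≥ 0. Suppose ε : ℕ → ℝ satisfies ε(N) → 0 as N → ∞, and f_{q,r}(N) ≥ N^{α − ε(N)} for all integers N ≥ 1. Then in fact f_{q,r}(N) ≥ N^α for all integers N ≥ 1. -/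
/-!
Blowing up each vertex of a coloring of `[M]` into a copy of a coloring of `[N]` gives a
coloring of `[M * N]` in which a monotone path with at most `r` colors visits its blocks along
such a path of the outer coloring and, inside each block, follows such a path of the inner one;
hence `f(M N) ≤ f(M) f(N)` and `f(N ^ k) ≤ f(N) ^ k`. Applying the hypothesis at `N ^ k` gives
`N ^ (α - ε(N ^ k)) ≤ f(N)` for every `k`, and letting `k → ∞` removes the error term.
-/

open Finset Filter Topology

namespace Fin

variable {m n : ℕ} {x y : Fin (m * n)}

lemma divNat_mono : Monotone (divNat : Fin (m * n) → Fin m) := fun x y hxy => by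
  rw [Fin.le_def, coe_divNat, coe_divNat]
  exact Nat.div_le_div_right hxy

lemma lt_of_divNat_lt (h : x.divNat < y.divNat) : x < y :=
  lt_of_not_ge fun hyx => (divNat_mono hyx).not_gt h

lemma lt_iff_modNat_lt_of_divNat_eq (h : x.divNat = y.divNat) :
    x < y ↔ x.modNat < y.modNat := by
  have hdiv : (x : ℕ) / n = y / n := by simpa [Fin.ext_iff] using h
  have hx := Nat.div_add_mod x n
  have hy := Nat.div_add_mod y n
  rw [hdiv] at hx
  rw [Fin.lt_def, Fin.lt_def, coe_modNat, coe_modNat]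
  omega

lemma eq_of_divNat_eq_of_modNat_eq (hdiv : x.divNat = y.divNat) (hmod : x.modNat = y.modNat) :
    x = y :=
  finProdFinEquiv.symm.injective (Prod.ext hdiv hmod)

end Fin

variable {q r N : ℕ}

def IsMonoPathSet (χ : Fin N → Fin N → Fin q) (S : Finset (Fin q)) (A : Finset (Fin N)) :
    Prop :=
  ∀ x ∈ A, ∀ y ∈ A, x < y → (∀ z ∈ A, z ≤ x ∨ y ≤ z) → χ x y ∈ S

lemma hasMonoPath_iff {χ : Fin N → Fin N → Fin q} {S : Finset (Fin q)} {ℓ : ℕ} :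
    HasMonoPath q N χ S ℓ ↔ ∃ A : Finset (Fin N), A.card = ℓ ∧ IsMonoPathSet χ S A := by
  constructor
  · rintro ⟨v, hv, hS⟩
    refine ⟨univ.image v, by simp [card_image_of_injective _ hv.injective], ?_⟩
    simp only [IsMonoPathSet, mem_image, mem_univ, true_and, forall_exists_index,
      forall_apply_eq_imp_iff]
    intro i j hij hgap
    refine hS i j (le_antisymm (hv.lt_iff_lt.1 hij) ?_)
    by_contra! hlt
    have hi : (i : ℕ) + 1 < ℓ := by omega
    have := hgap ⟨i + 1, hi⟩
    simp only [hv.le_iff_le, Fin.le_def] at this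
    omega
  · rintro ⟨A, rfl, hA⟩
    set e := A.orderIsoOfFin rfl
    refine ⟨fun i => e i, fun i j hij => e.strictMono hij, fun i j hij => ?_⟩
    refine hA _ (e i).2 _ (e j).2 (e.strictMono (Fin.lt_def.2 (by omega))) fun z hz => ?_
    have hz' : z = e (e.symm ⟨z, hz⟩) := by simp
    rw [hz']
    simp only [Subtype.coe_le_coe, e.le_iff_le, Fin.le_def]
    omega

lemma bddAbove_monoPathLengths (χ : Fin N → Fin N → Fin q) :
    BddAbove {ℓ : ℕ | ∃ S : Finset (Fin q), S.card ≤ r ∧ HasMonoPath q N χ S ℓ} := by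
  refine ⟨N, ?_⟩
  rintro ℓ ⟨S, -, hP⟩
  obtain ⟨A, rfl, -⟩ := hasMonoPath_iff.1 hP
  simpa using card_le_univ A

lemma card_le_maxMonoLen {χ : Fin N → Fin N → Fin q} {S : Finset (Fin q)} {A : Finset (Fin N)}
    (hS : S.card ≤ r) (hA : IsMonoPathSet χ S A) : A.card ≤ maxMonoLen q r N χ :=
  le_csSup (bddAbove_monoPathLengths χ) ⟨S, hS, hasMonoPath_iff.2 ⟨A, rfl, hA⟩⟩

lemma maxMonoLen_le {χ : Fin N → Fin N → Fin q} {B : ℕ}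
    (hB : ∀ (S : Finset (Fin q)) (A : Finset (Fin N)), S.card ≤ r → IsMonoPathSet χ S A →
      A.card ≤ B) :
    maxMonoLen q r N χ ≤ B := by
  refine csSup_le ⟨0, ∅, by simp, hasMonoPath_iff.2 ⟨∅, rfl, by simp [IsMonoPathSet]⟩⟩ ?_
  rintro ℓ ⟨S, hS, hP⟩
  obtain ⟨A, rfl, hA⟩ := hasMonoPath_iff.1 hP
  exact hB S A hS hA

lemma maxMonoLen_le_self (χ : Fin N → Fin N → Fin q) : maxMonoLen q r N χ ≤ N :=
  maxMonoLen_le fun _ A _ _ => by simpa using card_le_univ A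

section LexColoring

variable {M : ℕ} {χ₁ : Fin M → Fin M → Fin q} {χ₂ : Fin N → Fin N → Fin q}
  {S : Finset (Fin q)} {A : Finset (Fin (M * N))}

/-- `Fin (M * N)` is read as `Fin M × Fin N` ordered lexicographically, through `divNat` and
`modNat`: `χ₂` colors the edges inside each block, `χ₁` those between blocks. -/
def lexColoring (χ₁ : Fin M → Fin M → Fin q) (χ₂ : Fin N → Fin N → Fin q)
    (x y : Fin (M * N)) : Fin q :=
  if x.divNat = y.divNat then χ₂ x.modNat y.modNat else χ₁ x.divNat y.divNat

lemma IsMonoPathSet.image_modNat_filter (hA : IsMonoPathSet (lexColoring χ₁ χ₂) S A)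
    (c : Fin M) : IsMonoPathSet χ₂ S ((A.filter (·.divNat = c)).image Fin.modNat) := by
  simp only [IsMonoPathSet, mem_image, mem_filter, forall_exists_index, and_imp]
  rintro _ x hx rfl rfl _ y hy hyx rfl hxy hgap
  have hdiv := hyx.symm
  have hlt := (Fin.lt_iff_modNat_lt_of_divNat_eq hdiv).2 hxy
  have hcolor : lexColoring χ₁ χ₂ x y = χ₂ x.modNat y.modNat := if_pos hdiv
  refine hcolor ▸ hA x hx y hy hlt fun z hz => ?_
  by_contra! hzxy
  obtain ⟨hxz, hzy⟩ := hzxy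
  have hzc : z.divNat = x.divNat := le_antisymm (hdiv ▸ Fin.divNat_mono hzy.le)
    (Fin.divNat_mono hxz.le)
  rcases hgap z.modNat z hz hzc rfl with h | h
  · exact h.not_gt ((Fin.lt_iff_modNat_lt_of_divNat_eq hzc.symm).1 hxz)
  · exact h.not_gt ((Fin.lt_iff_modNat_lt_of_divNat_eq (hzc.trans hdiv)).1 hzy)

lemma IsMonoPathSet.image_divNat (hA : IsMonoPathSet (lexColoring χ₁ χ₂) S A) :
    IsMonoPathSet χ₁ S (A.image Fin.divNat) := by
  intro c hc c' hc' hcc' hgap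
  have hne : ∀ {d}, d ∈ A.image Fin.divNat → (A.filter (·.divNat = d)).Nonempty := fun hd => by
    obtain ⟨x, hx, rfl⟩ := mem_image.1 hd
    exact ⟨x, mem_filter.2 ⟨hx, rfl⟩⟩
  -- the last vertex of block `c` and the first vertex of block `c'` are adjacent on the path
  set x := (A.filter (·.divNat = c)).max' (hne hc)
  set y := (A.filter (·.divNat = c')).min' (hne hc')
  obtain ⟨hxA, hxc⟩ := mem_filter.1 (max'_mem _ (hne hc))
  obtain ⟨hyA, hyc⟩ := mem_filter.1 (min'_mem _ (hne hc'))
  have hcolor : lexColoring χ₁ χ₂ x y = χ₁ c c' := by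
    rw [lexColoring, if_neg (by rw [hxc, hyc]; exact hcc'.ne), hxc, hyc]
  refine hcolor ▸ hA x hxA y hyA (Fin.lt_of_divNat_lt (hxc ▸ hyc ▸ hcc')) fun z hz => ?_
  rcases hgap z.divNat (mem_image_of_mem _ hz) with h | h
  · refine .inl (le_of_not_gt fun hxz => ?_)
    have hzc : z.divNat = c := le_antisymm h (hxc ▸ Fin.divNat_mono hxz.le)
    exact hxz.not_ge (le_max' _ z (mem_filter.2 ⟨hz, hzc⟩))
  · refine .inr (le_of_not_gt fun hzy => ?_)
    have hzc : z.divNat = c' := le_antisymm (hyc ▸ Fin.divNat_mono hzy.le) h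
    exact hzy.not_ge (min'_le _ z (mem_filter.2 ⟨hz, hzc⟩))

lemma maxMonoLen_lexColoring_le (χ₁ : Fin M → Fin M → Fin q) (χ₂ : Fin N → Fin N → Fin q) :
    maxMonoLen q r (M * N) (lexColoring χ₁ χ₂) ≤ maxMonoLen q r M χ₁ * maxMonoLen q r N χ₂ := by
  refine maxMonoLen_le fun S A hS hA => ?_
  have hinj (c : Fin M) : Set.InjOn Fin.modNat (A.filter (·.divNat = c) : Set (Fin (M * N))) :=
    fun x hx y hy hxy => Fin.eq_of_divNat_eq_of_modNat_eq
      ((mem_filter.1 hx).2.trans (mem_filter.1 hy).2.symm) hxy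
  calc A.card = ∑ c ∈ A.image Fin.divNat, (A.filter (·.divNat = c)).card :=
        card_eq_sum_card_image _ _
    _ = ∑ c ∈ A.image Fin.divNat, ((A.filter (·.divNat = c)).image Fin.modNat).card :=
        sum_congr rfl fun c _ => (card_image_of_injOn (hinj c)).symm
    _ ≤ ∑ _c ∈ A.image Fin.divNat, maxMonoLen q r N χ₂ :=
        sum_le_sum fun c _ => card_le_maxMonoLen hS (hA.image_modNat_filter c)
    _ = (A.image Fin.divNat).card * maxMonoLen q r N χ₂ := by rw [sum_const, smul_eq_mul]
    _ ≤ maxMonoLen q r M χ₁ * maxMonoLen q r N χ₂ :=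
        Nat.mul_le_mul_right _ (card_le_maxMonoLen hS hA.image_divNat)

end LexColoring

lemma fqr_le_maxMonoLen (χ : Fin N → Fin N → Fin q) : fqr q r N ≤ maxMonoLen q r N χ :=
  Nat.sInf_le ⟨χ, rfl⟩

lemma exists_maxMonoLen_eq_fqr (hq : 0 < q) :
    ∃ χ : Fin N → Fin N → Fin q, maxMonoLen q r N χ = fqr q r N := by
  obtain ⟨χ, hχ⟩ : fqr q r N ∈ {L | ∃ χ : Fin N → Fin N → Fin q, L = maxMonoLen q r N χ} :=
    Nat.sInf_mem ⟨_, fun _ _ => ⟨0, hq⟩, rfl⟩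
  exact ⟨χ, hχ.symm⟩

lemma fqr_mul_le (hq : 0 < q) (M N : ℕ) : fqr q r (M * N) ≤ fqr q r M * fqr q r N := by
  obtain ⟨χ₁, h₁⟩ := exists_maxMonoLen_eq_fqr (r := r) (N := M) hq
  obtain ⟨χ₂, h₂⟩ := exists_maxMonoLen_eq_fqr (r := r) (N := N) hq
  calc fqr q r (M * N) ≤ maxMonoLen q r (M * N) (lexColoring χ₁ χ₂) := fqr_le_maxMonoLen _
    _ ≤ fqr q r M * fqr q r N := h₁ ▸ h₂ ▸ maxMonoLen_lexColoring_le χ₁ χ₂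

lemma fqr_pow_le (hq : 0 < q) (N k : ℕ) : fqr q r (N ^ k) ≤ fqr q r N ^ k := by
  induction k with
  | zero => exact (fqr_le_maxMonoLen fun _ _ => ⟨0, hq⟩).trans (maxMonoLen_le_self _)
  | succ k ih => exact (fqr_mul_le hq _ _).trans (Nat.mul_le_mul_right _ ih)

lemma rpow_le_of_map_pow_le_pow {f : ℕ → ℝ} (hf : ∀ N k, f (N ^ k) ≤ f N ^ k) {α : ℝ}
    {ε : ℕ → ℝ} (hε : Tendsto ε atTop (𝓝 0)) (h : ∀ N : ℕ, 1 ≤ N → (N : ℝ) ^ (α - ε N) ≤ f N)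
    {N : ℕ} (hN : 1 ≤ N) : (N : ℝ) ^ α ≤ f N := by
  obtain rfl | hN := hN.eq_or_lt
  · simpa using h 1 le_rfl
  have hN₀ : (0 : ℝ) ≤ N := N.cast_nonneg
  have hfN : 0 ≤ f N := (Real.rpow_pos_of_pos (by positivity) _).le.trans (h N hN.le)
  have hbound (k : ℕ) (hk : 1 ≤ k) : (N : ℝ) ^ (α - ε (N ^ k)) ≤ f N := by
    refine le_of_pow_le_pow_left₀ (Nat.one_le_iff_ne_zero.1 hk) hfN ?_
    calc ((N : ℝ) ^ (α - ε (N ^ k))) ^ k = ((N ^ k : ℕ) : ℝ) ^ (α - ε (N ^ k)) := by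
          rw [Real.rpow_pow_comm hN₀, Nat.cast_pow]
      _ ≤ f (N ^ k) := h _ (Nat.one_le_pow _ _ (by omega))
      _ ≤ f N ^ k := hf N k
  have hlim : Tendsto (fun k => (N : ℝ) ^ (α - ε (N ^ k))) atTop (𝓝 ((N : ℝ) ^ α)) := by
    have hε' := hε.comp (tendsto_pow_atTop_atTop_of_one_lt hN)
    refine (Real.continuousAt_const_rpow (by positivity)).tendsto.comp ?_
    simpa using tendsto_const_nhds.sub hε'
  exact le_of_tendsto hlim (eventually_atTop.2 ⟨1, hbound⟩)

open Filter in
theorem stmt_12_general (q r : ℕ) (hq : r < q) (α : ℝ)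
    (ε : ℕ → ℝ) (hε : Tendsto ε atTop (nhds 0))
    (h : ∀ N : ℕ, 1 ≤ N → (N : ℝ) ^ (α - ε N) ≤ (fqr q r N : ℝ)) :
    ∀ N : ℕ, 1 ≤ N → (N : ℝ) ^ α ≤ (fqr q r N : ℝ) :=
  fun _ hN => rpow_le_of_map_pow_le_pow
    (fun N k => by exact_mod_cast fqr_pow_le (Nat.zero_lt_of_lt hq) N k) hε h hN

open Filter in
/-- Fix integers `q > r ≥ 1` and a real `α ≥ 0`. If `ε(N) → 0` and
`f_{q,r}(N) ≥ N^{α - ε(N)}` for all `N ≥ 1`, then `f_{q,r}(N) ≥ N^α` for all `N ≥ 1`. -/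
theorem stmt_12 (q r : ℕ) (hr : 1 ≤ r) (hq : r < q) (α : ℝ) (hα : 0 ≤ α)
    (ε : ℕ → ℝ) (hε : Tendsto ε atTop (nhds 0))
    (h : ∀ N : ℕ, 1 ≤ N → (N : ℝ) ^ (α - ε N) ≤ (fqr q r N : ℝ)) :
    ∀ N : ℕ, 1 ≤ N → (N : ℝ) ^ α ≤ (fqr q r N : ℝ) :=
  stmt_12_general q r hq α ε hε h
end

section
/- Let q > r ≥ 1 and N ≥ 1 be integers, and suppose p = ⌊q/(q−r)⌋ ≥ 2. Then f_{q,r}(N) ≥ f_{p, p−1}(N) and g_{q,r}(N) ≥ g_{p, p−1}(N). -/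
/-- A tournament on `Fin N`: irreflexive, and for each pair of distinct vertices exactly one
of the two orientations holds. -/
def IsTournament {N : ℕ} (T : Fin N → Fin N → Prop) : Prop :=
  (∀ u, ¬ T u u) ∧ ∀ u v : Fin N, u ≠ v → (T u v ↔ ¬ T v u)

/-- A directed path of length `ℓ` (number of vertices) in the tournament `T` with the
`q`-edge-coloring `χ`, all of whose edge colors lie in `S`. -/
def HasDirPath (q N : ℕ) (T : Fin N → Fin N → Prop) (χ : Fin N → Fin N → Fin q)
    (S : Finset (Fin q)) (ℓ : ℕ) : Prop :=
  ∃ v : Fin ℓ → Fin N, Function.Injective v ∧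
    ∀ i j : Fin ℓ, (i : ℕ) + 1 = (j : ℕ) → T (v i) (v j) ∧ χ (v i) (v j) ∈ S

/-- The maximum length of a directed path whose edges use at most `r` colors. -/
noncomputable def maxDirLen (q r N : ℕ) (T : Fin N → Fin N → Prop)
    (χ : Fin N → Fin N → Fin q) : ℕ :=
  sSup {ℓ : ℕ | ∃ S : Finset (Fin q), S.card ≤ r ∧ HasDirPath q N T χ S ℓ}

/-- `gqr q r N` : the minimum over `N`-vertex tournaments and `q`-edge-colorings of the
maximum length of a directed path whose edges use at most `r` colors. -/
noncomputable def gqr (q r N : ℕ) : ℕ :=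
  sInf {L : ℕ | ∃ (T : Fin N → Fin N → Prop) (χ : Fin N → Fin N → Fin q),
    IsTournament T ∧ L = maxDirLen q r N T χ}

/-- Grouping map: there is `g : Fin q → Fin p` such that the preimage of any `p-1` groups
has at most `r` colors. -/
lemma exists_group_map (q r p : ℕ) (hr : 1 ≤ r) (hq : r < q)
    (hp : p = q / (q - r)) (hp2 : 2 ≤ p) :
    ∃ g : Fin q → Fin p, ∀ S' : Finset (Fin p), S'.card ≤ p - 1 →
      (Finset.univ.filter (fun c : Fin q => g c ∈ S')).card ≤ r := by
  have hd : 1 ≤ q - r := by omega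
  set d := q - r with hd'
  have hpd : p * d ≤ q := by rw [hp]; exact Nat.div_mul_le_self q d
  refine ⟨fun i => ⟨min ((i : ℕ) / d) (p - 1), by
    have := Nat.min_le_right ((i : ℕ) / d) (p - 1); omega⟩, ?_⟩
  set g : Fin q → Fin p := fun i => ⟨min ((i : ℕ) / d) (p - 1), by
    have := Nat.min_le_right ((i : ℕ) / d) (p - 1); omega⟩ with hg
  have hfib : ∀ j : Fin p, d ≤ (Finset.univ.filter (fun i : Fin q => g i = j)).card := by
    intro j
    have hj1 : (j : ℕ) ≤ p - 1 := by have := j.isLt; omega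
    have hjq : (j : ℕ) * d + d ≤ q := by
      have : ((j : ℕ) + 1) * d ≤ p * d := Nat.mul_le_mul_right d (by omega)
      nlinarith
    have key : ∀ k : Fin d, g ⟨(j : ℕ) * d + (k : ℕ), by omega⟩ = j := by
      intro k
      have hk : (k : ℕ) < d := k.isLt
      have hdiv : ((j : ℕ) * d + (k : ℕ)) / d = (j : ℕ) := by
        have h' : (j : ℕ) * d + (k : ℕ) = d * (j : ℕ) + (k : ℕ) := by ring
        rw [h', Nat.mul_add_div (by omega : 0 < d), Nat.div_eq_of_lt hk, Nat.add_zero]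
      apply Fin.ext
      simp only [hg, hdiv]
      omega
    have hinj : Function.Injective
        (fun k : Fin d => (⟨(j : ℕ) * d + (k : ℕ), by omega⟩ : Fin q)) := by
      intro a b hab
      simp only [Fin.mk.injEq] at hab
      exact Fin.ext (by omega)
    have := Finset.card_le_card_of_injOn
      (s := (Finset.univ : Finset (Fin d)))
      (t := Finset.univ.filter (fun i : Fin q => g i = j))
      (fun k : Fin d => (⟨(j : ℕ) * d + (k : ℕ), by omega⟩ : Fin q))
      (fun k _ => by simp [key k]) (hinj.injOn)
    simpa using this
  intro S' hS'
  obtain ⟨j, hj⟩ : ∃ j : Fin p, j ∉ S' := by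
    by_contra h
    push_neg at h
    have : S' = Finset.univ := Finset.eq_univ_of_forall h
    rw [this, Finset.card_univ, Fintype.card_fin] at hS'
    omega
  set A := Finset.univ.filter (fun c : Fin q => g c ∈ S')
  set B := Finset.univ.filter (fun i : Fin q => g i = j)
  have hdisj : Disjoint A B := by
    rw [Finset.disjoint_left]
    intro c hcA hcB
    simp only [A, B, Finset.mem_filter, Finset.mem_univ, true_and] at hcA hcB
    exact hj (hcB ▸ hcA)
  have hu : (A ∪ B).card = A.card + B.card := Finset.card_union_of_disjoint hdisj
  have hle : (A ∪ B).card ≤ q := by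
    have := Finset.card_le_univ (A ∪ B)
    simpa using this
  have hB : d ≤ B.card := hfib j
  omega

/-- Let `q > r ≥ 1`, `N ≥ 1`, and suppose `p = ⌊q/(q−r)⌋ ≥ 2`. Then
`f_{q,r}(N) ≥ f_{p,p−1}(N)` and `g_{q,r}(N) ≥ g_{p,p−1}(N)`. -/
theorem stmt_16 (q r N p : ℕ) (hr : 1 ≤ r) (hq : r < q) (hN : 1 ≤ N)
    (hp : p = q / (q - r)) (hp2 : 2 ≤ p) :
    fqr p (p - 1) N ≤ fqr q r N ∧ gqr p (p - 1) N ≤ gqr q r N := by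
  obtain ⟨g, hg⟩ := exists_group_map q r p hr hq hp hp2
  have hq0 : 0 < q := by omega
  constructor
  · -- fqr part
    have hBne : {L : ℕ | ∃ χ : Fin N → Fin N → Fin q, L = maxMonoLen q r N χ}.Nonempty :=
      ⟨_, ⟨fun _ _ => ⟨0, hq0⟩, rfl⟩⟩
    obtain ⟨χ, hχ⟩ := Nat.sInf_mem hBne
    show fqr p (p - 1) N ≤ sInf _
    rw [hχ]
    have h1 : fqr p (p - 1) N ≤ maxMonoLen p (p - 1) N (fun u v => g (χ u v)) :=
      Nat.sInf_le ⟨_, rfl⟩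
    refine h1.trans ?_
    apply csSup_le_csSup'
    · refine ⟨N, fun ℓ hℓ => ?_⟩
      obtain ⟨S, _, v, hv, _⟩ := hℓ
      have := Fintype.card_le_of_injective v hv.injective
      simpa using this
    · rintro ℓ ⟨S', hS', v, hv, hvc⟩
      refine ⟨Finset.univ.filter (fun c : Fin q => g c ∈ S'), hg S' hS', v, hv, ?_⟩
      intro i j hij
      simp only [Finset.mem_filter, Finset.mem_univ, true_and]
      exact hvc i j hij
  · -- gqr part
    have hT : IsTournament (fun u v : Fin N => u < v) := by
      refine ⟨fun u => lt_irrefl u, fun u v huv => ?_⟩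
      constructor
      · exact fun h h' => lt_asymm h h'
      · intro h
        exact (lt_or_gt_of_ne huv).resolve_right h
    have hBne : {L : ℕ | ∃ (T : Fin N → Fin N → Prop) (χ : Fin N → Fin N → Fin q),
        IsTournament T ∧ L = maxDirLen q r N T χ}.Nonempty :=
      ⟨_, _, fun _ _ => ⟨0, hq0⟩, hT, rfl⟩
    obtain ⟨T, χ, hTourn, hχ⟩ := Nat.sInf_mem hBne
    show gqr p (p - 1) N ≤ sInf _
    rw [hχ]
    have h1 : gqr p (p - 1) N ≤ maxDirLen p (p - 1) N T (fun u v => g (χ u v)) :=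
      Nat.sInf_le ⟨T, _, hTourn, rfl⟩
    refine h1.trans ?_
    apply csSup_le_csSup'
    · refine ⟨N, fun ℓ hℓ => ?_⟩
      obtain ⟨S, _, v, hv, _⟩ := hℓ
      have := Fintype.card_le_of_injective v hv
      simpa using this
    · rintro ℓ ⟨S', hS', v, hv, hvc⟩
      refine ⟨Finset.univ.filter (fun c : Fin q => g c ∈ S'), hg S' hS', v, hv, ?_⟩
      intro i j hij
      obtain ⟨h1, h2⟩ := hvc i j hij
      refine ⟨h1, ?_⟩
      simp only [Finset.mem_filter, Finset.mem_univ, true_and]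
      exact h2
end

section
/- Let 0 < δ < 1/2, and let T₀ be an N₀-vertex tournament that can be made transitive by reversing the orientations of at most δ²N₀² edges. Then there exist an integer N ≥ (1−δ)N₀, a subset V of the vertices of T₀ with |V| = N, and a linear order ≺ on V such that for every v ∈ V, the number of vertices w ∈ V for which the edge between v and w is backwards with respect to ≺ (i.e., v ≺ w and w → v in T₀, or w ≺ v and v → w in T₀) is at most 4δN. -/
/-- Let `0 < δ < 1/2` and let `T₀` be an `N₀`-vertex tournament that can be made transitive
by reversing at most `δ²N₀²` edges (i.e. some ordering of its vertices has at most `δ²N₀²`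
backward edges). Then there are `N ≥ (1-δ)N₀` and a set of `N` vertices equipped with a
linear order — given here by an injective enumeration `v : Fin N → Fin N₀`, the order being
that of the indices — such that every vertex is incident to at most `4δN` backward edges
within the set. -/
theorem stmt_17 (N₀ : ℕ) (δ : ℝ) (hδ0 : 0 < δ) (hδ : δ < 1 / 2)
    (T₀ : Fin N₀ → Fin N₀ → Prop) (hT : IsTournament T₀)
    (hclose : ∃ π : Fin N₀ ≃ Fin N₀,
      ({p : Fin N₀ × Fin N₀ | π p.1 < π p.2 ∧ T₀ p.2 p.1}.ncard : ℝ) ≤ δ ^ 2 * (N₀ : ℝ) ^ 2) :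
    ∃ N : ℕ, (1 - δ) * (N₀ : ℝ) ≤ (N : ℝ) ∧
      ∃ v : Fin N → Fin N₀, Function.Injective v ∧
        ∀ a : Fin N,
          (({b : Fin N | (a < b ∧ T₀ (v b) (v a)) ∨ (b < a ∧ T₀ (v a) (v b))}.ncard : ℝ))
            ≤ 4 * δ * (N : ℝ) := by
  classical
  obtain ⟨π, hπ⟩ := hclose
  -- badE u w : the (unordered) edge between u and w is backward w.r.t. π
  set badE : Fin N₀ → Fin N₀ → Prop := fun u w =>
    (π u < π w ∧ T₀ w u) ∨ (π w < π u ∧ T₀ u w) with hbadE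
  set D : Fin N₀ → Finset (Fin N₀) := fun u => Finset.univ.filter (badE u) with hD
  set B : Finset (Fin N₀ × Fin N₀) :=
    Finset.univ.filter (fun p => π p.1 < π p.2 ∧ T₀ p.2 p.1) with hB
  have hBcard : ({p : Fin N₀ × Fin N₀ | π p.1 < π p.2 ∧ T₀ p.2 p.1}.ncard : ℕ) = B.card := by
    rw [Set.ncard_eq_toFinset_card']
    congr 1
    ext p
    simp [hB]
  -- double counting: ∑ u, (D u).card = card of ordered backward pairs ≤ 2 * B.card
  set P : Finset (Fin N₀ × Fin N₀) := Finset.univ.filter (fun p => badE p.1 p.2) with hP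
  have hsum : ∑ u, (D u).card = P.card := by
    rw [Finset.card_eq_sum_card_fiberwise (f := Prod.fst) (t := Finset.univ)
      (fun x _ => Finset.mem_univ _)]
    refine Finset.sum_congr rfl fun u _ => ?_
    have himg : P.filter (fun p => p.1 = u) = (D u).image (fun w => (u, w)) := by
      ext p
      simp only [hP, hD, Finset.mem_filter, Finset.mem_univ, true_and, Finset.mem_image,
        Prod.ext_iff]
      constructor
      · rintro ⟨h1, h2⟩
        exact ⟨p.2, by rw [← h2]; exact h1, h2.symm, rfl⟩
      · rintro ⟨w, hw, h1, h2⟩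
        subst h1; subst h2; exact ⟨hw, rfl⟩
    rw [himg, Finset.card_image_of_injective _ (fun x y h => (Prod.ext_iff.1 h).2)]
  have hPB : P.card ≤ 2 * B.card := by
    have hsub : P ⊆ B ∪ B.image Prod.swap := by
      intro p hp
      simp only [hP, Finset.mem_filter, Finset.mem_univ, true_and, hbadE] at hp
      rcases hp with h | h
      · exact Finset.mem_union_left _ (by simp [hB, h])
      · refine Finset.mem_union_right _ ?_
        refine Finset.mem_image.2 ⟨(p.2, p.1), ?_, rfl⟩
        simp [hB, h.1, h.2]
    calc P.card ≤ (B ∪ B.image Prod.swap).card := Finset.card_le_card hsub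
      _ ≤ B.card + (B.image Prod.swap).card := Finset.card_union_le _ _
      _ ≤ B.card + B.card := by
          exact Nat.add_le_add_left (Finset.card_image_le) _
      _ = 2 * B.card := by ring
  -- the set of bad vertices
  set S : Finset (Fin N₀) :=
    Finset.univ.filter (fun u => 2 * δ * N₀ < ((D u).card : ℝ)) with hS
  have hScard : (S.card : ℝ) ≤ δ * N₀ := by
    rcases Nat.eq_zero_or_pos N₀ with h0 | h0
    · subst h0
      have : S = ∅ := Finset.eq_empty_of_isEmpty S
      simp [this]
    · have h1 : (S.card : ℝ) * (2 * δ * N₀) ≤ ∑ u ∈ S, ((D u).card : ℝ) := by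
        have := Finset.card_nsmul_le_sum S (fun u => ((D u).card : ℝ)) (2 * δ * N₀)
          (fun u hu => le_of_lt (by simpa [hS] using (Finset.mem_filter.1 hu).2))
        simpa [nsmul_eq_mul] using this
      have h2 : ∑ u ∈ S, ((D u).card : ℝ) ≤ ∑ u, ((D u).card : ℝ) :=
        Finset.sum_le_sum_of_subset_of_nonneg (Finset.subset_univ _)
          (fun u _ _ => by positivity)
      have h3 : ∑ u, ((D u).card : ℝ) = (P.card : ℝ) := by
        rw [← hsum]; push_cast; ring
      have h4 : (P.card : ℝ) ≤ 2 * (B.card : ℝ) := by exact_mod_cast hPB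
      have h5 : (B.card : ℝ) ≤ δ ^ 2 * (N₀ : ℝ) ^ 2 := by
        exact_mod_cast hBcard ▸ hπ
      have hN₀ : (0 : ℝ) < N₀ := by exact_mod_cast h0
      nlinarith [mul_pos hδ0 hN₀]
  -- good vertices
  set G : Finset (Fin N₀) := Sᶜ with hG
  set N : ℕ := G.card with hN
  have hNeq : (N : ℝ) = (N₀ : ℝ) - S.card := by
    have : N = Fintype.card (Fin N₀) - S.card := by rw [hN, hG, Finset.card_compl]
    rw [this, Fintype.card_fin]
    have hle : S.card ≤ N₀ := by
      simpa using Finset.card_le_card (Finset.subset_univ S)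
    push_cast [Nat.cast_sub hle]
    ring
  have hNlb : (1 - δ) * (N₀ : ℝ) ≤ (N : ℝ) := by
    rw [hNeq]; nlinarith
  refine ⟨N, hNlb, ?_⟩
  -- enumerate the good vertices in π-order
  set G' : Finset (Fin N₀) := G.image π with hG'
  have hG'card : G'.card = N := by
    rw [hG', Finset.card_image_of_injective _ π.injective]
  set e := G'.orderIsoOfFin hG'card with he
  set v : Fin N → Fin N₀ := fun a => π.symm (e a) with hv
  have hπv : ∀ a, π (v a) = (e a : Fin N₀) := fun a => π.apply_symm_apply _
  have hvG : ∀ a, v a ∈ G := by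
    intro a
    have hmem : (e a : Fin N₀) ∈ G.image π := (e a).2
    obtain ⟨u, hu, hue⟩ := Finset.mem_image.1 hmem
    have hva : v a = u := by
      apply π.injective
      rw [hπv a, hue]
    simpa [hva] using hu
  have hvinj : Function.Injective v := fun a b hab => by
    have : (e a : Fin N₀) = e b := π.symm.injective hab
    exact e.injective (Subtype.ext this)
  refine ⟨v, hvinj, ?_⟩
  intro a
  -- every good vertex has ≤ 2δN₀ backward edges, and within the set even fewer
  have hgood : ((D (v a)).card : ℝ) ≤ 2 * δ * N₀ := by
    have := hvG a
    rw [hG, Finset.mem_compl, hS, Finset.mem_filter] at this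
    push_neg at this
    exact this (Finset.mem_univ _)
  have hmono : ∀ {x y : Fin N}, x < y → π (v x) < π (v y) := by
    intro x y hxy
    rw [hπv, hπv]
    exact e.strictMono hxy
  have hmaps : ∀ b ∈ {b : Fin N | (a < b ∧ T₀ (v b) (v a)) ∨ (b < a ∧ T₀ (v a) (v b))},
      v b ∈ (↑(D (v a)) : Set (Fin N₀)) := by
    intro b hb
    simp only [Set.mem_setOf_eq] at hb
    simp only [hD, Finset.coe_filter, Set.mem_setOf_eq, Finset.mem_univ, true_and, hbadE]
    rcases hb with ⟨h1, h2⟩ | ⟨h1, h2⟩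
    · exact Or.inl ⟨hmono h1, h2⟩
    · exact Or.inr ⟨hmono h1, h2⟩
  have hncard : {b : Fin N | (a < b ∧ T₀ (v b) (v a)) ∨ (b < a ∧ T₀ (v a) (v b))}.ncard
      ≤ (D (v a)).card := by
    have := Set.ncard_le_ncard_of_injOn v hmaps (hvinj.injOn) (Finset.finite_toSet _)
    rwa [Set.ncard_coe_finset] at this
  have hN₀2N : (N₀ : ℝ) ≤ 2 * N := by nlinarith
  calc ({b : Fin N | (a < b ∧ T₀ (v b) (v a)) ∨ (b < a ∧ T₀ (v a) (v b))}.ncard : ℝ)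
      ≤ ((D (v a)).card : ℝ) := by exact_mod_cast hncard
    _ ≤ 2 * δ * N₀ := hgood
    _ ≤ 4 * δ * N := by nlinarith
end
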